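/- arXiv:1506.01758 — 3 statements merged into one kernel-verified Lean document; each statement's English description precedes it below -/
import Mathlib

section
/- If −Δζ = V·ζ on ℝⁿ with ζ > 0 of class C², V continuous, then for every compactly supported C¹ function φ: ∫ V·φ² ≤ ∫ ‖∇φ‖². -/
/-!
With `ψ = φ² / ζ`, the equation gives `∫ V φ² = -∫ ψ Δζ`, and integrating by parts in each
coordinate direction turns this into `∑ᵢ ∫ ∂ᵢψ ∂ᵢζ`. Picone's identity
`(∂φ)² - ∂(φ²/ζ) ∂ζ = (∂φ - (φ/ζ) ∂ζ)²` bounds each integrand by `(∂ᵢφ)²`, and these sum to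
`‖∇φ‖²`.
-/

open MeasureTheory

noncomputable def lap {n : ℕ} (f : EuclideanSpace ℝ (Fin n) → ℝ)
    (x : EuclideanSpace ℝ (Fin n)) : ℝ :=
  ∑ i : Fin n,
    fderiv ℝ (fun y => fderiv ℝ f y (EuclideanSpace.single i 1)) x
      (EuclideanSpace.single i 1)

section Picone

variable {E : Type*} [NormedAddCommGroup E] [NormedSpace ℝ E]

theorem fderiv_sq_div_apply {φ ζ : E → ℝ} {x : E} (hφ : DifferentiableAt ℝ φ x)
    (hζ : DifferentiableAt ℝ ζ x) (hζx : ζ x ≠ 0) (v : E) :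
    fderiv ℝ (fun y => φ y ^ 2 / ζ y) x v =
      (2 * φ x * fderiv ℝ φ x v * ζ x - φ x ^ 2 * fderiv ℝ ζ x v) / ζ x ^ 2 := by
  have hline := ((hφ.hasFDerivAt.hasLineDerivAt v).pow 2).div
    (hζ.hasFDerivAt.hasLineDerivAt v) (by simpa using hζx)
  have hdiff : DifferentiableAt ℝ (fun y => φ y ^ 2 / ζ y) x := by
    fun_prop (disch := exact hζx)
  simpa using hdiff.hasFDerivAt.hasLineDerivAt v |>.unique hline

theorem fderiv_sq_div_apply_mul_le {φ ζ : E → ℝ} {x : E} (hφ : DifferentiableAt ℝ φ x)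
    (hζ : DifferentiableAt ℝ ζ x) (hζx : ζ x ≠ 0) (v : E) :
    fderiv ℝ (fun y => φ y ^ 2 / ζ y) x v * fderiv ℝ ζ x v ≤ fderiv ℝ φ x v ^ 2 := by
  rw [fderiv_sq_div_apply hφ hζ hζx]
  have picone : fderiv ℝ φ x v ^ 2 -
      (2 * φ x * fderiv ℝ φ x v * ζ x - φ x ^ 2 * fderiv ℝ ζ x v) / ζ x ^ 2 * fderiv ℝ ζ x v =
      ((fderiv ℝ φ x v * ζ x - φ x * fderiv ℝ ζ x v) / ζ x) ^ 2 := by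
    field_simp
    ring
  exact sub_nonneg.mp (picone ▸ sq_nonneg _)

end Picone

theorem ContDiff.continuous_fderiv_apply_const {E : Type*} [NormedAddCommGroup E]
    [NormedSpace ℝ E] {f : E → ℝ} (hf : ContDiff ℝ 1 f) (v : E) :
    Continuous fun x => fderiv ℝ f x v :=
  (hf.continuous_fderiv one_ne_zero).clm_apply continuous_const

theorem Continuous.integrable_mul_of_hasCompactSupport_left {X : Type*} [TopologicalSpace X]
    [MeasurableSpace X] [OpensMeasurableSpace X] {μ : Measure X} [IsFiniteMeasureOnCompacts μ]
    {f g : X → ℝ} (hf : Continuous f) (hg : Continuous g) (hfc : HasCompactSupport f) :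
    Integrable (fun x => f x * g x) μ :=
  (hf.mul hg).integrable_of_hasCompactSupport hfc.mul_right

section IntegrationByParts

variable {E : Type*} [NormedAddCommGroup E] [NormedSpace ℝ E] [FiniteDimensional ℝ E]
  [MeasurableSpace E] [BorelSpace E] {μ : Measure E} [μ.IsAddHaarMeasure]

theorem integral_mul_fderiv_eq_neg_fderiv_mul_of_hasCompactSupport {f g : E → ℝ}
    (hf : ContDiff ℝ 1 f) (hfc : HasCompactSupport f) (hg : ContDiff ℝ 1 g) (v : E) :
    ∫ x, f x * fderiv ℝ g x v ∂μ = -∫ x, fderiv ℝ f x v * g x ∂μ :=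
  integral_mul_fderiv_eq_neg_fderiv_mul_of_integrable
    ((hf.continuous_fderiv_apply_const v).integrable_mul_of_hasCompactSupport_left
      hg.continuous (hfc.fderiv_apply ℝ v))
    (hf.continuous.integrable_mul_of_hasCompactSupport_left
      (hg.continuous_fderiv_apply_const v) hfc)
    (hf.continuous.integrable_mul_of_hasCompactSupport_left hg.continuous hfc)
    (fun x _ => hf.differentiable one_ne_zero x) (fun x _ => hg.differentiable one_ne_zero x)

end IntegrationByParts

theorem integral_mul_lap_eq_neg_sum {n : ℕ} {ψ ζ : EuclideanSpace ℝ (Fin n) → ℝ}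
    (hψ : ContDiff ℝ 1 ψ) (hψc : HasCompactSupport ψ) (hζ : ContDiff ℝ 2 ζ) :
    ∫ x, ψ x * lap ζ x = -∑ i, ∫ x, fderiv ℝ ψ x (EuclideanSpace.single i 1) *
      fderiv ℝ ζ x (EuclideanSpace.single i 1) := by
  have hζ' (i : Fin n) : ContDiff ℝ 1 fun y => fderiv ℝ ζ y (EuclideanSpace.single i 1) :=
    (hζ.fderiv_right le_rfl).clm_apply contDiff_const
  simp_rw [lap, Finset.mul_sum]
  rw [integral_finsetSum _ fun i _ => hψ.continuous.integrable_mul_of_hasCompactSupport_left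
    ((hζ' i).continuous_fderiv_apply_const _) hψc]
  simp_rw [integral_mul_fderiv_eq_neg_fderiv_mul_of_hasCompactSupport hψ hψc (hζ' _),
    Finset.sum_neg_distrib]

theorem norm_gradient_sq_eq_sum {ι : Type*} [Fintype ι] [DecidableEq ι]
    (f : EuclideanSpace ℝ ι → ℝ) (x : EuclideanSpace ℝ ι) :
    ‖gradient f x‖ ^ 2 = ∑ i, fderiv ℝ f x (EuclideanSpace.single i 1) ^ 2 := by
  simp [EuclideanSpace.real_norm_sq_eq, ← inner_gradient_left, EuclideanSpace.inner_single_right]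

theorem scalar_stability_inequality_general {n : ℕ}
    (ζ V : EuclideanSpace ℝ (Fin n) → ℝ)
    (hζ : ContDiff ℝ 2 ζ) (hζpos : ∀ x, 0 < ζ x)
    (heq : ∀ x, -lap ζ x = V x * ζ x)
    (φ : EuclideanSpace ℝ (Fin n) → ℝ)
    (hφ : ContDiff ℝ 1 φ) (hφc : HasCompactSupport φ) :
    (∫ x, V x * φ x ^ 2) ≤ ∫ x, ‖gradient φ x‖ ^ 2 := by
  have hζne (x) : ζ x ≠ 0 := (hζpos x).ne'
  set ψ := fun x => φ x ^ 2 / ζ x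
  have hψ : ContDiff ℝ 1 ψ := (hφ.pow 2).div (hζ.of_le one_le_two) hζne
  have hψc : HasCompactSupport ψ := hφc.mono fun x hx h => hx (by simp [ψ, h])
  have hlhs : ∫ x, V x * φ x ^ 2 = -∫ x, ψ x * lap ζ x := by
    rw [← integral_neg]
    congr with x
    rw [← mul_neg, heq x]
    simp only [ψ]
    field_simp [hζne x]
  have hφ'_sq (i : Fin n) :
      Integrable fun x => fderiv ℝ φ x (EuclideanSpace.single i 1) ^ 2 := by
    have hφ'_cont := hφ.continuous_fderiv_apply_const (EuclideanSpace.single i 1)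
    simpa only [sq] using hφ'_cont.integrable_mul_of_hasCompactSupport_left hφ'_cont
      (hφc.fderiv_apply ℝ _)
  have hrhs : ∫ x, ‖gradient φ x‖ ^ 2 =
      ∑ i, ∫ x, fderiv ℝ φ x (EuclideanSpace.single i 1) ^ 2 := by
    simp_rw [norm_gradient_sq_eq_sum]
    exact integral_finsetSum _ fun i _ => hφ'_sq i
  rw [hlhs, integral_mul_lap_eq_neg_sum hψ hψc hζ, neg_neg, hrhs]
  refine Finset.sum_le_sum fun i _ => integral_mono ?_ (hφ'_sq i) fun x =>
    fderiv_sq_div_apply_mul_le (hφ.differentiable one_ne_zero x)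
      (hζ.differentiable two_ne_zero x) (hζne x) _
  exact (hψ.continuous_fderiv_apply_const _).integrable_mul_of_hasCompactSupport_left
    ((hζ.of_le one_le_two).continuous_fderiv_apply_const _) (hψc.fderiv_apply ℝ _)

theorem scalar_stability_inequality {n : ℕ}
    (ζ V : EuclideanSpace ℝ (Fin n) → ℝ)
    (hζ : ContDiff ℝ 2 ζ) (hζpos : ∀ x, 0 < ζ x) (hV : Continuous V)
    (heq : ∀ x, -lap ζ x = V x * ζ x)
    (φ : EuclideanSpace ℝ (Fin n) → ℝ)
    (hφ : ContDiff ℝ 1 φ) (hφc : HasCompactSupport φ) :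
    (∫ x, V x * φ x ^ 2) ≤ ∫ x, ‖gradient φ x‖ ^ 2 :=
  scalar_stability_inequality_general ζ V hζ hζpos heq φ hφ hφc
end

section
/- Let f : ℝⁿ → ℝ be C² with ∇f(p) ≠ 0, and suppose every row of the Hessian at p is parallel to ∇f(p) (i.e., ∇(∂_k f)(p) = κ_k·∇f(p) for scalars κ_k). Let γ : ℝ → ℝⁿ be a C² unit-speed curve lying in the level set {f = c} with γ(t̄) = p. Then γ''(t̄) = 0. -/
/-!
Differentiating `‖γ'‖² = 1` gives `γ'' ⟂ γ'`. Differentiating `f ∘ γ = c` gives `∇f(γ) ⟂ γ'` along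
the whole curve, and differentiating that identity once more at `t̄` gives
`⟪∇f(p), γ''⟫ + ⟪D(∇f)(p) γ', γ'⟫ = 0`. When every row of the Hessian is a multiple of `∇f(p)`,
the Hessian kills every vector orthogonal to `∇f(p)`, in particular `γ'`; so `γ''` is orthogonal
to the two nonzero orthogonal vectors `γ'` and `∇f(p)`, which span the plane.
-/

open InnerProductSpace Module

local notation "⟪" x ", " y "⟫" => @inner ℝ _ _ x y

section Calculus

variable {E : Type*} [NormedAddCommGroup E] [InnerProductSpace ℝ E]

theorem inner_deriv_add_inner_deriv_eq_zero_of_inner_const {u w : ℝ → E} {t C : ℝ}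
    (hu : DifferentiableAt ℝ u t) (hw : DifferentiableAt ℝ w t) (h : ∀ s, ⟪u s, w s⟫ = C) :
    ⟪u t, deriv w t⟫ + ⟪deriv u t, w t⟫ = 0 := by
  have hderiv := hu.hasDerivAt.inner ℝ hw.hasDerivAt
  rw [funext h] at hderiv
  exact (hasDerivAt_const t C).unique hderiv |>.symm

theorem inner_deriv_eq_zero_of_norm_const {u : ℝ → E} {t r : ℝ}
    (hu : DifferentiableAt ℝ u t) (h : ∀ s, ‖u s‖ = r) : ⟪u t, deriv u t⟫ = 0 := by
  have hsum := inner_deriv_add_inner_deriv_eq_zero_of_inner_const hu hu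
    (C := r ^ 2) fun s => by rw [real_inner_self_eq_norm_sq, h]
  rw [real_inner_comm (u t)] at hsum
  linarith

variable [CompleteSpace E]

theorem inner_gradient_deriv_eq_zero_of_comp_const {f : E → ℝ} {γ : ℝ → E} {t c : ℝ}
    (hf : DifferentiableAt ℝ f (γ t)) (hγ : DifferentiableAt ℝ γ t) (h : ∀ s, f (γ s) = c) :
    ⟪gradient f (γ t), deriv γ t⟫ = 0 := by
  rw [inner_gradient_left, ← fderiv_comp_deriv t hf hγ]
  exact (funext h : f ∘ γ = fun _ => c) ▸ deriv_const t c

theorem ContDiff.differentiable_gradient_two {f : E → ℝ} (hf : ContDiff ℝ 2 f) :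
    Differentiable ℝ (gradient f) := by
  have hfderiv : ContDiff ℝ 1 (fderiv ℝ f) := hf.fderiv_right (by norm_num)
  exact ((toDual ℝ E).symm.contDiff.comp hfderiv).differentiable one_ne_zero

end Calculus

theorem fderiv_gradient_apply_eq_zero_of_rows_parallel {ι : Type*} [Fintype ι]
    {f : EuclideanSpace ℝ ι → ℝ} {p v : EuclideanSpace ℝ ι}
    (hdiff : DifferentiableAt ℝ (gradient f) p)
    (hrows : ∀ k : ι, ∃ κ : ℝ, gradient (fun x => gradient f x k) p = κ • gradient f p)
    (hv : ⟪gradient f p, v⟫ = 0) :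
    fderiv ℝ (gradient f) p v = 0 := by
  ext k
  obtain ⟨κ, hκ⟩ := hrows k
  have hrow : HasFDerivAt (fun x => gradient f x k)
      ((EuclideanSpace.proj k).comp (fderiv ℝ (gradient f) p)) p :=
    (EuclideanSpace.proj (𝕜 := ℝ) k).hasFDerivAt.comp p hdiff.hasFDerivAt
  calc fderiv ℝ (gradient f) p v k
      = ⟪gradient (fun x => gradient f x k) p, v⟫ := by
        rw [inner_gradient_left, hrow.fderiv]; rfl
    _ = 0 := by rw [hκ, real_inner_smul_left, hv, mul_zero]

theorem eq_zero_of_inner_eq_zero_of_finrank_eq_two {E : Type*} [NormedAddCommGroup E]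
    [InnerProductSpace ℝ E] (hE : finrank ℝ E = 2) {u w a : E} (hu : u ≠ 0) (hw : w ≠ 0)
    (huw : ⟪u, w⟫ = 0) (hau : ⟪u, a⟫ = 0) (haw : ⟪w, a⟫ = 0) : a = 0 := by
  have hindep : LinearIndependent ℝ ![u, w] :=
    linearIndependent_of_ne_zero_of_inner_eq_zero (fun i => by fin_cases i <;> simpa)
      fun i j hij => by fin_cases i <;> fin_cases j <;> simp_all [real_inner_comm]
  have : FiniteDimensional ℝ E := .of_finrank_eq_succ hE
  refine ext_inner_left_basis (basisOfLinearIndependentOfCardEqFinrank hindep (by simp [hE]))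
    fun i => ?_
  fin_cases i <;> simpa

theorem level_set_geodesic
    (f : EuclideanSpace ℝ (Fin 2) → ℝ) (hf : ContDiff ℝ 2 f)
    (p : EuclideanSpace ℝ (Fin 2)) (hp : gradient f p ≠ 0)
    (hrows : ∀ k : Fin 2, ∃ κ : ℝ,
      gradient (fun x => gradient f x k) p = κ • gradient f p)
    (γ : ℝ → EuclideanSpace ℝ (Fin 2)) (hγ : ContDiff ℝ 2 γ)
    (hunit : ∀ t, ‖deriv γ t‖ = 1)
    (c : ℝ) (hlevel : ∀ t, f (γ t) = c)
    (tbar : ℝ) (hγp : γ tbar = p) :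
    deriv (deriv γ) tbar = 0 := by
  subst hγp
  have hγ' : Differentiable ℝ (deriv γ) := hγ.differentiable_deriv_two
  have hγd : Differentiable ℝ γ := hγ.differentiable (by norm_num)
  have hgrad : Differentiable ℝ (gradient f) := hf.differentiable_gradient_two
  have htangent : ∀ s, ⟪gradient f (γ s), deriv γ s⟫ = 0 := fun s =>
    inner_gradient_deriv_eq_zero_of_comp_const (hf.differentiable (by norm_num) _) (hγd s) hlevel
  have hhessian : fderiv ℝ (gradient f) (γ tbar) (deriv γ tbar) = 0 :=
    fderiv_gradient_apply_eq_zero_of_rows_parallel (hgrad _) hrows (htangent tbar)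
  have hnormal : ⟪gradient f (γ tbar), deriv (deriv γ) tbar⟫ = 0 := by
    have hsum := inner_deriv_add_inner_deriv_eq_zero_of_inner_const
      ((hgrad _).comp tbar (hγd tbar)) (hγ' tbar) htangent
    rwa [fderiv_comp_deriv tbar (hgrad _) (hγd tbar), hhessian, inner_zero_left, add_zero,
      Function.comp_apply] at hsum
  have hvelocity : ⟪deriv γ tbar, deriv (deriv γ) tbar⟫ = 0 :=
    inner_deriv_eq_zero_of_norm_const (hγ' tbar) hunit
  exact eq_zero_of_inner_eq_zero_of_finrank_eq_two finrank_euclideanSpace_fin hp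
    (fun h => by simpa [h] using hunit tbar) (htangent tbar) hnormal hvelocity
end

section
/- If u ∈ C³(ℝⁿ) satisfies the weighted Poincaré inequality ∫ (‖Hess u‖² − ‖∇‖∇u‖‖²)·η² ≤ ∫ ‖∇u‖²·‖∇η‖² for all compactly supported Lipschitz η, and ∇u ∈ L^∞, and there exist compactly supported Lipschitz functions η_ε equal to 1 on a fixed ball B with ∫ ‖∇η_ε‖² ≤ ε, then ∫_B (‖Hess u‖² − ‖∇‖∇u‖‖²) = 0, and hence by the equality case of Kato's inequality, at every point p ∈ B with ∇u(p) ≠ 0 every row of Hess u(p) is parallel to ∇u(p). -/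
open MeasureTheory Metric

noncomputable def hessFrobSq {n : ℕ} (f : EuclideanSpace ℝ (Fin n) → ℝ)
    (p : EuclideanSpace ℝ (Fin n)) : ℝ :=
  ∑ k : Fin n, ‖gradient (fun x => gradient f x k) p‖ ^ 2

/-!
Where `∇u ≠ 0`, the chain rule and the symmetry of the Hessian give `∂ₖ‖∇u‖ = ⟪∇∂ₖu, ν⟫` with
`ν = ∇u / ‖∇u‖`, so the Kato defect `‖Hess u‖² - ‖∇‖∇u‖‖²` equals `∑ₖ ‖∇∂ₖu - ⟪∇∂ₖu, ν⟫ ν‖²`,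
the squared distances of the Hessian rows from the line `ℝ ∇u`. Where `∇u = 0`, `‖∇u‖` is
minimal, so its gradient vanishes and the defect is `‖Hess u‖² ≥ 0`.
Testing the Poincaré inequality with the cut-offs `η_ε` bounds the integral of the defect over the
ball by `M² ε`, so the nonnegative defect vanishes a.e. on the ball, hence everywhere on the open
part of the ball where `∇u ≠ 0`, on which it is continuous.
-/

open InnerProductSpace

section Gradient

variable {F : Type*} [NormedAddCommGroup F] [InnerProductSpace ℝ F]

theorem norm_sub_inner_smul_sq {a ν : F} (hν : ‖ν‖ = 1) :
    ‖a - ⟪a, ν⟫_ℝ • ν‖ ^ 2 = ‖a‖ ^ 2 - ⟪a, ν⟫_ℝ ^ 2 := by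
  rw [norm_sub_sq_real, real_inner_smul_right, norm_smul, Real.norm_eq_abs, hν]
  simp only [mul_one, sq_abs]
  ring

theorem HasFDerivAt.norm {G : Type*} [NormedAddCommGroup G] [NormedSpace ℝ G] {f : G → F}
    {f' : G →L[ℝ] F} {x : G} (hf : HasFDerivAt f f' x) (h0 : f x ≠ 0) :
    HasFDerivAt (fun y => ‖f y‖) (‖f x‖⁻¹ • (innerSL ℝ (f x)).comp f') x := by
  have h := hf.norm_sq.sqrt (by simpa using h0)
  simp only [Real.sqrt_sq (norm_nonneg _)] at h
  convert h using 1
  ext v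
  simp only [smul_apply, ContinuousLinearMap.comp_apply, coe_innerSL_apply, smul_eq_mul, one_div,
    mul_inv_rev, nsmul_eq_mul, Nat.cast_ofNat]
  field_simp

variable [CompleteSpace F]

theorem contDiff_gradient {f : F → ℝ} {n : WithTop ℕ∞} (hf : ContDiff ℝ (n + 1) f) :
    ContDiff ℝ n (gradient f) :=
  (toDual ℝ F).symm.contDiff.comp (hf.fderiv_right le_rfl)

theorem continuous_gradient {f : F → ℝ} (hf : ContDiff ℝ 1 f) : Continuous (gradient f) :=
  (contDiff_gradient (n := 0) hf).continuous

theorem isOpen_setOf_gradient_ne_zero {f : F → ℝ} (hf : ContDiff ℝ 1 f) :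
    IsOpen {x | gradient f x ≠ 0} :=
  isOpen_ne_fun (continuous_gradient hf) continuous_const

theorem measurable_gradient [MeasurableSpace F] [BorelSpace F] [FiniteDimensional ℝ F]
    (f : F → ℝ) : Measurable (gradient f) :=
  (toDual ℝ F).symm.continuous.measurable.comp (measurable_fderiv ℝ f)

theorem IsLocalMin.gradient_eq_zero {f : F → ℝ} {x : F} (h : IsLocalMin f x) :
    gradient f x = 0 := by
  simp [gradient, h.fderiv_eq_zero]

theorem norm_gradient_le_of_lipschitzWith {f : F → ℝ} {K : NNReal} (hf : LipschitzWith K f)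
    (x : F) : ‖gradient f x‖ ≤ K := by
  simpa [gradient] using norm_fderiv_le_of_lipschitz ℝ hf (x₀ := x)

theorem integrable_norm_gradient_sq_of_lipschitzWith [FiniteDimensional ℝ F] [MeasurableSpace F]
    [BorelSpace F] {μ : Measure F} [IsFiniteMeasureOnCompacts μ] {η : F → ℝ} {K : NNReal}
    (hη : LipschitzWith K η) (hc : HasCompactSupport η) :
    Integrable (fun x => ‖gradient η x‖ ^ 2) μ := by
  have hsupp : Function.support (fun x => ‖gradient η x‖ ^ 2) ⊆ tsupport η := by
    intro x hx
    by_contra hxη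
    have : fderiv ℝ η x = 0 := Function.notMem_support.1 fun h => hxη (support_fderiv_subset ℝ h)
    simp [gradient, this] at hx
  rw [← integrableOn_iff_integrable_of_support_subset hsupp]
  refine Measure.integrableOn_of_bounded (M := K ^ 2) hc.measure_lt_top.ne
    ((measurable_gradient η).norm.pow_const 2).aestronglyMeasurable (ae_of_all _ fun x => ?_)
  rw [Real.norm_of_nonneg (sq_nonneg _)]
  exact pow_le_pow_left₀ (norm_nonneg _) (norm_gradient_le_of_lipschitzWith hη x) 2

end Gradient

section Euclidean

variable {n : ℕ}

theorem gradient_apply (f : EuclideanSpace ℝ (Fin n) → ℝ) (x : EuclideanSpace ℝ (Fin n))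
    (k : Fin n) : gradient f x k = fderiv ℝ f x (EuclideanSpace.single k 1) := by
  rw [← inner_gradient_left, EuclideanSpace.inner_single_right]
  simp

variable {u : EuclideanSpace ℝ (Fin n) → ℝ}

theorem gradient_gradient_apply (hu : ContDiff ℝ 2 u) (x : EuclideanSpace ℝ (Fin n))
    (j k : Fin n) :
    gradient (fun y => gradient u y j) x k =
      fderiv ℝ (fderiv ℝ u) x (EuclideanSpace.single k 1) (EuclideanSpace.single j 1) := by
  have hdiff : DifferentiableAt ℝ (fderiv ℝ u) x :=
    (hu.fderiv_right (m := 1) le_rfl).differentiable one_ne_zero x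
  simp only [gradient_apply]
  rw [fderiv_clm_apply hdiff (differentiableAt_const _)]
  simp

theorem gradient_gradient_apply_comm (hu : ContDiff ℝ 2 u) (x : EuclideanSpace ℝ (Fin n))
    (j k : Fin n) :
    gradient (fun y => gradient u y j) x k = gradient (fun y => gradient u y k) x j := by
  rw [gradient_gradient_apply hu, gradient_gradient_apply hu,
    (hu.contDiffAt.isSymmSndFDerivAt (by simp)).eq]

theorem fderiv_gradient_apply_single (hu : ContDiff ℝ 2 u) (x : EuclideanSpace ℝ (Fin n))
    (k : Fin n) :
    fderiv ℝ (gradient u) x (EuclideanSpace.single k 1) =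
      gradient (fun y => gradient u y k) x := by
  have hdiff : DifferentiableAt ℝ (gradient u) x :=
    (contDiff_gradient (n := 1) hu).differentiable one_ne_zero x
  ext j
  rw [← gradient_gradient_apply_comm hu, gradient_apply]
  have := ((EuclideanSpace.proj j).hasFDerivAt.comp x hdiff.hasFDerivAt).fderiv
  exact (congrArg (fun L => L (EuclideanSpace.single k 1)) this).symm

theorem gradient_norm_gradient_apply (hu : ContDiff ℝ 2 u) {x : EuclideanSpace ℝ (Fin n)}
    (hx : gradient u x ≠ 0) (k : Fin n) :
    gradient (fun y => ‖gradient u y‖) x k =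
      ⟪gradient (fun y => gradient u y k) x, ‖gradient u x‖⁻¹ • gradient u x⟫_ℝ := by
  have hdiff : DifferentiableAt ℝ (gradient u) x :=
    (contDiff_gradient (n := 1) hu).differentiable one_ne_zero x
  rw [gradient_apply, (hdiff.hasFDerivAt.norm hx).fderiv]
  simp [fderiv_gradient_apply_single hu]

theorem continuous_hessFrobSq (hu : ContDiff ℝ 2 u) : Continuous (hessFrobSq u) := by
  have hcoord (k : Fin n) : ContDiff ℝ 1 (fun y => gradient u y k) :=
    (EuclideanSpace.proj k).contDiff.comp (contDiff_gradient hu)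
  exact continuous_finsetSum _ fun k _ => (continuous_gradient (hcoord k)).norm.pow 2

end Euclidean

noncomputable def katoDefect {n : ℕ} (u : EuclideanSpace ℝ (Fin n) → ℝ)
    (x : EuclideanSpace ℝ (Fin n)) : ℝ :=
  hessFrobSq u x - ‖gradient (fun y => ‖gradient u y‖) x‖ ^ 2

section Kato

variable {n : ℕ} {u : EuclideanSpace ℝ (Fin n) → ℝ}

theorem katoDefect_eq_sum (hu : ContDiff ℝ 2 u) {x : EuclideanSpace ℝ (Fin n)}
    (hx : gradient u x ≠ 0) :
    katoDefect u x = ∑ k, ‖gradient (fun y => gradient u y k) x -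
      ⟪gradient (fun y => gradient u y k) x, ‖gradient u x‖⁻¹ • gradient u x⟫_ℝ •
        (‖gradient u x‖⁻¹ • gradient u x)‖ ^ 2 := by
  have hν : ‖‖gradient u x‖⁻¹ • gradient u x‖ = 1 := by
    rw [norm_smul, norm_inv, norm_norm, inv_mul_cancel₀ (norm_ne_zero_iff.2 hx)]
  simp only [norm_sub_inner_smul_sq hν]
  rw [Finset.sum_sub_distrib, katoDefect, hessFrobSq,
    EuclideanSpace.norm_sq_eq (gradient (fun y => ‖gradient u y‖) x)]
  simp only [gradient_norm_gradient_apply hu hx, Real.norm_eq_abs, sq_abs]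

theorem katoDefect_nonneg (hu : ContDiff ℝ 2 u) (x : EuclideanSpace ℝ (Fin n)) :
    0 ≤ katoDefect u x := by
  by_cases hx : gradient u x = 0
  · have hmin : IsLocalMin (fun y => ‖gradient u y‖) x :=
      Filter.Eventually.of_forall fun y => by simp [hx]
    rw [katoDefect, hmin.gradient_eq_zero, norm_zero, zero_pow two_ne_zero, sub_zero]
    exact Finset.sum_nonneg fun _ _ => by positivity
  · rw [katoDefect_eq_sum hu hx]
    positivity

theorem exists_smul_eq_of_katoDefect_eq_zero (hu : ContDiff ℝ 2 u)
    {x : EuclideanSpace ℝ (Fin n)} (hx : gradient u x ≠ 0) (h0 : katoDefect u x = 0)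
    (k : Fin n) : ∃ κ : ℝ, gradient (fun y => gradient u y k) x = κ • gradient u x := by
  rw [katoDefect_eq_sum hu hx, Finset.sum_eq_zero_iff_of_nonneg (fun _ _ => by positivity)] at h0
  refine ⟨⟪gradient (fun y => gradient u y k) x, ‖gradient u x‖⁻¹ • gradient u x⟫_ℝ *
    ‖gradient u x‖⁻¹, ?_⟩
  rw [mul_smul, ← sub_eq_zero, ← norm_eq_zero, ← sq_eq_zero_iff (M₀ := ℝ)]
  exact h0 k (Finset.mem_univ k)

theorem locallyIntegrable_katoDefect (hu : ContDiff ℝ 2 u) : LocallyIntegrable (katoDefect u) := by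
  have hmeas : Measurable (katoDefect u) :=
    (continuous_hessFrobSq hu).measurable.sub ((measurable_gradient _).norm.pow_const 2)
  refine (continuous_hessFrobSq hu).locallyIntegrable.mono hmeas.aestronglyMeasurable
    (ae_of_all _ fun x => ?_)
  have hH : 0 ≤ hessFrobSq u x := Finset.sum_nonneg fun _ _ => by positivity
  rw [Real.norm_of_nonneg (katoDefect_nonneg hu x), Real.norm_of_nonneg hH]
  exact sub_le_self _ (sq_nonneg _)

theorem continuousOn_katoDefect (hu : ContDiff ℝ 2 u) :
    ContinuousOn (katoDefect u) {x | gradient u x ≠ 0} := by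
  have hnorm : ContDiffOn ℝ 1 (fun y => ‖gradient u y‖) {x | gradient u x ≠ 0} :=
    (contDiff_gradient hu).contDiffOn.norm ℝ fun _ hx => hx
  have hgrad : ContinuousOn (gradient fun y => ‖gradient u y‖) {x | gradient u x ≠ 0} :=
    (toDual ℝ _).symm.continuous.comp_continuousOn
      (hnorm.continuousOn_fderiv_of_isOpen (isOpen_setOf_gradient_ne_zero (hu.of_le one_le_two))
        le_rfl)
  exact (continuous_hessFrobSq hu).continuousOn.sub (hgrad.norm.pow 2)

end Kato

theorem nonpos_of_forall_pos_le_mul {a C : ℝ} (h : ∀ ε > 0, a ≤ C * ε) : a ≤ 0 := by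
  have hlim : Filter.Tendsto (fun ε => C * ε) (nhdsWithin 0 (Set.Ioi 0)) (nhds 0) := by
    simpa using ((continuous_const_mul C).tendsto 0).mono_left nhdsWithin_le_nhds
  exact ge_of_tendsto hlim (eventually_nhdsWithin_of_forall h)

section Integration

variable {X : Type*} [MeasurableSpace X] {μ : Measure X}

theorem setIntegral_le_integral_mul_sq [TopologicalSpace X] [OpensMeasurableSpace X] [T2Space X]
    {g : X → ℝ} (hg : LocallyIntegrable g μ) (hg0 : 0 ≤ g) {η : X → ℝ} (hη : Continuous η)
    (hc : HasCompactSupport η) {s : Set X} (hs : MeasurableSet s) (hη1 : ∀ x ∈ s, η x = 1) :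
    ∫ x in s, g x ∂μ ≤ ∫ x, g x * η x ^ 2 ∂μ := by
  have hint : Integrable (fun x => g x * η x ^ 2) μ := by
    have hc2 : HasCompactSupport fun x => η x ^ 2 := hc.comp_left (zero_pow two_ne_zero)
    simpa only [smul_eq_mul, mul_comm] using
      hg.integrable_smul_left_of_hasCompactSupport (𝕜 := ℝ) (g := fun x => η x ^ 2)
        (hη.pow 2) hc2
  calc ∫ x in s, g x ∂μ = ∫ x in s, g x * η x ^ 2 ∂μ :=
        setIntegral_congr_fun hs fun x hx => by simp [hη1 x hx]
    _ ≤ ∫ x, g x * η x ^ 2 ∂μ :=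
        setIntegral_le_integral hint (ae_of_all _ fun x => mul_nonneg (hg0 x) (sq_nonneg _))

theorem integral_norm_sq_mul_le {F : Type*} [NormedAddCommGroup F] {v : X → F} {M : ℝ}
    (hv : ∀ x, ‖v x‖ ≤ M) {w : X → ℝ} (hw : Integrable w μ) (hw0 : 0 ≤ w) :
    ∫ x, ‖v x‖ ^ 2 * w x ∂μ ≤ M ^ 2 * ∫ x, w x ∂μ := by
  rw [← integral_const_mul]
  refine integral_mono_of_nonneg (ae_of_all _ fun x => mul_nonneg (sq_nonneg _) (hw0 x))
    (hw.const_mul _) (ae_of_all _ fun x => ?_)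
  exact mul_le_mul_of_nonneg_right (pow_le_pow_left₀ (norm_nonneg _) (hv x) 2) (hw0 x)

theorem eqOn_zero_of_setIntegral_eq_zero [TopologicalSpace X] [μ.IsOpenPosMeasure] {g : X → ℝ}
    (hg0 : 0 ≤ g) {s U : Set X} (hg : IntegrableOn g s μ) (h : ∫ x in s, g x ∂μ = 0)
    (hUs : U ⊆ s) (hU : IsOpen U) (hgU : ContinuousOn g U) : Set.EqOn g 0 U := by
  have hae := (setIntegral_eq_zero_iff_of_nonneg_ae (ae_of_all _ hg0) hg).1 h
  exact Measure.eqOn_open_of_ae_eq (ae_restrict_of_ae_restrict_of_subset hUs hae) hU hgU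
    continuousOn_const

end Integration

theorem poincare_implies_rigidity_general {n : ℕ}
    (u : EuclideanSpace ℝ (Fin n) → ℝ) (hu : ContDiff ℝ 3 u)
    (hpoin : ∀ η : EuclideanSpace ℝ (Fin n) → ℝ,
      (∃ K, LipschitzWith K η) → HasCompactSupport η →
      (∫ x, (hessFrobSq u x - ‖gradient (fun y => ‖gradient u y‖) x‖ ^ 2) * η x ^ 2) ≤
        ∫ x, ‖gradient u x‖ ^ 2 * ‖gradient η x‖ ^ 2)
    (M : ℝ) (hM : ∀ x, ‖gradient u x‖ ≤ M)
    (x₀ : EuclideanSpace ℝ (Fin n)) (r : ℝ)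
    (hcut : ∀ ε > (0 : ℝ), ∃ η : EuclideanSpace ℝ (Fin n) → ℝ,
      (∃ K, LipschitzWith K η) ∧ HasCompactSupport η ∧
      (∀ x ∈ ball x₀ r, η x = 1) ∧ (∫ x, ‖gradient η x‖ ^ 2) ≤ ε) :
    (∫ x in ball x₀ r,
        (hessFrobSq u x - ‖gradient (fun y => ‖gradient u y‖) x‖ ^ 2)) = 0 ∧
    ∀ p ∈ ball x₀ r, gradient u p ≠ 0 →
      ∀ k : Fin n, ∃ κ : ℝ,
        gradient (fun x => gradient u x k) p = κ • gradient u p := by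
  have hu2 : ContDiff ℝ 2 u := hu.of_le (by norm_num)
  have hbound : ∀ ε > 0, ∫ x in ball x₀ r, katoDefect u x ≤ M ^ 2 * ε := by
    intro ε hε
    obtain ⟨η, ⟨K, hK⟩, hc, hη1, hηε⟩ := hcut ε hε
    calc ∫ x in ball x₀ r, katoDefect u x ≤ ∫ x, katoDefect u x * η x ^ 2 :=
          setIntegral_le_integral_mul_sq (locallyIntegrable_katoDefect hu2)
            (katoDefect_nonneg hu2) hK.continuous hc measurableSet_ball hη1
      _ ≤ ∫ x, ‖gradient u x‖ ^ 2 * ‖gradient η x‖ ^ 2 := hpoin η ⟨K, hK⟩ hc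
      _ ≤ M ^ 2 * ∫ x, ‖gradient η x‖ ^ 2 :=
          integral_norm_sq_mul_le hM (integrable_norm_gradient_sq_of_lipschitzWith hK hc)
            fun _ => sq_nonneg _
      _ ≤ M ^ 2 * ε := by gcongr
  have hzero : ∫ x in ball x₀ r, katoDefect u x = 0 :=
    le_antisymm (nonpos_of_forall_pos_le_mul hbound)
      (setIntegral_nonneg measurableSet_ball fun x _ => katoDefect_nonneg hu2 x)
  refine ⟨hzero, fun p hp hp0 => exists_smul_eq_of_katoDefect_eq_zero hu2 hp0 ?_⟩
  have hint : IntegrableOn (katoDefect u) (ball x₀ r) :=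
    ((locallyIntegrable_katoDefect hu2).integrableOn_isCompact
      (isCompact_closedBall x₀ r)).mono_set ball_subset_closedBall
  exact eqOn_zero_of_setIntegral_eq_zero (katoDefect_nonneg hu2) hint hzero
    Set.inter_subset_left
    (isOpen_ball.inter (isOpen_setOf_gradient_ne_zero (hu.of_le (by norm_num))))
    ((continuousOn_katoDefect hu2).mono Set.inter_subset_right) ⟨hp, hp0⟩

theorem poincare_implies_rigidity {n : ℕ}
    (u : EuclideanSpace ℝ (Fin n) → ℝ) (hu : ContDiff ℝ 3 u)
    (hpoin : ∀ η : EuclideanSpace ℝ (Fin n) → ℝ,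
      (∃ K, LipschitzWith K η) → HasCompactSupport η →
      (∫ x, (hessFrobSq u x - ‖gradient (fun y => ‖gradient u y‖) x‖ ^ 2) * η x ^ 2) ≤
        ∫ x, ‖gradient u x‖ ^ 2 * ‖gradient η x‖ ^ 2)
    (M : ℝ) (hM : ∀ x, ‖gradient u x‖ ≤ M)
    (x₀ : EuclideanSpace ℝ (Fin n)) (r : ℝ) (hr : 0 < r)
    (hcut : ∀ ε > (0 : ℝ), ∃ η : EuclideanSpace ℝ (Fin n) → ℝ,
      (∃ K, LipschitzWith K η) ∧ HasCompactSupport η ∧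
      (∀ x ∈ ball x₀ r, η x = 1) ∧ (∫ x, ‖gradient η x‖ ^ 2) ≤ ε) :
    (∫ x in ball x₀ r,
        (hessFrobSq u x - ‖gradient (fun y => ‖gradient u y‖) x‖ ^ 2)) = 0 ∧
    ∀ p ∈ ball x₀ r, gradient u p ≠ 0 →
      ∀ k : Fin n, ∃ κ : ℝ,
        gradient (fun x => gradient u x k) p = κ • gradient u p :=
  poincare_implies_rigidity_general u hu hpoin M hM x₀ r hcut
end
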